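/- Let m_0 ≥ 1 and n ≥ 1 be integers. Define c_m = (Π_{j=1}^{m} (1 + (n−1)/(m_0+j))) · ((2m_0−1)!/((m_0−1)!)^2) · (((m_0+m−1)!)^2/(2m_0+m−1)!) · (1/m!). Then c_m = O(m^{n−2}) as m → ∞. -/

import Mathlib

open scoped BigOperators

noncomputable section

namespace Stmt6

/-- The norm coefficients
`c_m = (Π_{j=1}^m (1+(n−1)/(m0+j))) · ((2m0−1)!/((m0−1)!)²) · (((m0+m−1)!)²/(2m0+m−1)!) · (1/m!)`. -/
def c (m0 n : ℕ) (m : ℕ) : ℝ :=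
  (∏ j ∈ Finset.range m, (1 + ((n : ℝ) - 1) / ((m0 : ℝ) + j + 1))) *
    ((Nat.factorial (2 * m0 - 1) : ℝ) / (Nat.factorial (m0 - 1) : ℝ) ^ 2) *
    ((Nat.factorial (m0 + m - 1) : ℝ) ^ 2 / (Nat.factorial (2 * m0 + m - 1) : ℝ)) *
    (1 / (Nat.factorial m : ℝ))

lemma fact_add_le (a b : ℕ) :
    Nat.factorial (a + b) ≤ Nat.factorial a * (a + b) ^ b := by
  induction b with
  | zero => simp
  | succ b ih =>
    have h1 : Nat.factorial (a + (b + 1)) = (a + b + 1) * Nat.factorial (a + b) := by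
      rw [show a + (b + 1) = (a + b) + 1 by ring, Nat.factorial_succ]
    rw [h1]
    calc (a + b + 1) * Nat.factorial (a + b)
        ≤ (a + b + 1) * (Nat.factorial a * (a + b) ^ b) := Nat.mul_le_mul_left _ ih
      _ ≤ (a + b + 1) * (Nat.factorial a * (a + b + 1) ^ b) :=
          Nat.mul_le_mul_left _ (Nat.mul_le_mul_left _ (Nat.pow_le_pow_left (by omega) b))
      _ = Nat.factorial a * (a + (b + 1)) ^ (b + 1) := by
          rw [show a + (b + 1) = a + b + 1 by ring, pow_succ]; ring

lemma prodQ (p : ℕ) (m : ℕ) :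
    ∏ j ∈ Finset.range m, (((j : ℝ) + p + 2) / ((j : ℝ) + 2)) =
      (Nat.factorial (m + p + 1) : ℝ) /
        ((Nat.factorial (p + 1) : ℝ) * (Nat.factorial (m + 1) : ℝ)) := by
  induction m with
  | zero =>
    simp only [Finset.range_zero, Finset.prod_empty, Nat.zero_add, Nat.factorial_one,
      Nat.cast_one, mul_one]
    rw [div_self (Nat.cast_ne_zero.mpr (Nat.factorial_ne_zero _))]
  | succ m ih =>
    rw [Finset.prod_range_succ, ih]
    have h2 : Nat.factorial ((m + 1) + p + 1) =
        (m + p + 2) * Nat.factorial (m + p + 1) := by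
      rw [show (m + 1) + p + 1 = (m + p + 1) + 1 by ring, Nat.factorial_succ]
    have h3 : Nat.factorial ((m + 1) + 1) = (m + 2) * Nat.factorial (m + 1) := by
      rw [Nat.factorial_succ]
    rw [h2, h3]
    have hf1 : (Nat.factorial (p + 1) : ℝ) ≠ 0 := Nat.cast_ne_zero.mpr (Nat.factorial_ne_zero _)
    have hf2 : (Nat.factorial (m + 1) : ℝ) ≠ 0 := Nat.cast_ne_zero.mpr (Nat.factorial_ne_zero _)
    have hf3 : (Nat.factorial (m + p + 1) : ℝ) ≠ 0 := Nat.cast_ne_zero.mpr (Nat.factorial_ne_zero _)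
    push_cast
    field_simp

lemma nat_key (k m : ℕ) :
    (m + 1) * (Nat.factorial (k + m) * Nat.factorial (k + m)) ≤
      Nat.factorial (2 * k + m + 1) * Nat.factorial m := by
  have l1 : Nat.factorial (k + m) ≤ Nat.factorial m * (m + k) ^ k := by
    rw [show k + m = m + k by ring]; exact fact_add_le m k
  have l2 : Nat.factorial (k + m) * (k + m + 1) ^ (k + 1) ≤ Nat.factorial (2 * k + m + 1) := by
    have h := Nat.factorial_mul_pow_le_factorial (m := k + m) (n := k + 1)
    rwa [show k + m + (k + 1) = 2 * k + m + 1 by ring] at h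
  calc (m + 1) * (Nat.factorial (k + m) * Nat.factorial (k + m))
      ≤ (m + 1) * (Nat.factorial (k + m) * (Nat.factorial m * (m + k) ^ k)) := by
        gcongr
    _ = Nat.factorial (k + m) * Nat.factorial m * ((m + 1) * (m + k) ^ k) := by ring
    _ ≤ Nat.factorial (k + m) * Nat.factorial m * ((k + m + 1) * (k + m + 1) ^ k) :=
        Nat.mul_le_mul_left _
          (Nat.mul_le_mul (by omega) (Nat.pow_le_pow_left (by omega) k))
    _ = Nat.factorial (k + m) * (k + m + 1) ^ (k + 1) * Nat.factorial m := by ring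
    _ ≤ Nat.factorial (2 * k + m + 1) * Nat.factorial m := Nat.mul_le_mul_right _ l2

/-- `c_m = O(m^{n−2})` as `m → ∞`. -/
theorem stmt6 (m0 n : ℕ) (hm0 : 1 ≤ m0) (hn : 1 ≤ n) :
    ∃ C > (0 : ℝ), ∃ M : ℕ, ∀ m : ℕ, M ≤ m →
      c m0 n m ≤ C * (m : ℝ) ^ ((n : ℝ) - 2) := by
  obtain ⟨k, rfl⟩ : ∃ k, m0 = k + 1 := ⟨m0 - 1, by omega⟩
  obtain ⟨p, rfl⟩ : ∃ p, n = p + 1 := ⟨n - 1, by omega⟩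
  set A : ℝ := (Nat.factorial (2 * (k + 1) - 1) : ℝ) / (Nat.factorial ((k + 1) - 1) : ℝ) ^ 2
    with hA_def
  have hA0 : 0 < A := by
    apply div_pos
    · exact_mod_cast Nat.factorial_pos _
    · positivity
  refine ⟨A * ((p : ℝ) + 2) ^ p / (Nat.factorial (p + 1) : ℝ), by positivity, 1, ?_⟩
  intro m hm
  have hmR : (1 : ℝ) ≤ (m : ℝ) := by exact_mod_cast hm
  have hm0R : (0 : ℝ) < (m : ℝ) := by linarith
  have hfp : (0 : ℝ) < (Nat.factorial (p + 1) : ℝ) := by exact_mod_cast Nat.factorial_pos _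
  -- the exponent
  have hexp : (m : ℝ) ^ (((p + 1 : ℕ) : ℝ) - 2) = (m : ℝ) ^ p / (m : ℝ) := by
    rw [show ((p + 1 : ℕ) : ℝ) - 2 = (p : ℝ) - 1 by push_cast; ring,
      Real.rpow_sub hm0R, Real.rpow_one, Real.rpow_natCast]
  -- unfold c with index simplification
  have e1 : (k + 1) + m - 1 = k + m := by omega
  have e2 : 2 * (k + 1) + m - 1 = 2 * k + m + 1 := by omega
  set P : ℝ := ∏ j ∈ Finset.range m, (1 + (((p + 1 : ℕ) : ℝ) - 1) / (((k + 1 : ℕ) : ℝ) + (j : ℝ) + 1))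
    with hP_def
  set B : ℝ := (Nat.factorial (k + m) : ℝ) ^ 2 / (Nat.factorial (2 * k + m + 1) : ℝ)
    with hB_def
  have hc : c (k + 1) (p + 1) m = P * A * (B * (1 / (Nat.factorial m : ℝ))) := by
    simp only [c, e1, e2, hP_def, hB_def, hA_def]
    push_cast
    ring
  -- bound the product P
  have hP0 : 0 ≤ P := by
    apply Finset.prod_nonneg
    intro j _
    have : (0 : ℝ) ≤ (((p + 1 : ℕ) : ℝ) - 1) / (((k + 1 : ℕ) : ℝ) + (j : ℝ) + 1) := by
      apply div_nonneg
      · push_cast; linarith [Nat.cast_nonneg (α := ℝ) p]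
      · push_cast; positivity
    linarith
  have hP : P ≤ ((m : ℝ) + p + 1) ^ p / (Nat.factorial (p + 1) : ℝ) := by
    have step1 : P ≤ ∏ j ∈ Finset.range m, (((j : ℝ) + p + 2) / ((j : ℝ) + 2)) := by
      apply Finset.prod_le_prod
      · intro j _
        have : (0 : ℝ) ≤ (((p + 1 : ℕ) : ℝ) - 1) / (((k + 1 : ℕ) : ℝ) + (j : ℝ) + 1) := by
          apply div_nonneg
          · push_cast; linarith [Nat.cast_nonneg (α := ℝ) p]
          · push_cast; positivity
        linarith
      · intro j _
        have heq : ((j : ℝ) + p + 2) / ((j : ℝ) + 2) = 1 + (p : ℝ) / ((j : ℝ) + 2) := by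
          field_simp
          ring
        rw [heq]
        have h1 : ((p + 1 : ℕ) : ℝ) - 1 = (p : ℝ) := by push_cast; ring
        have h2 : ((k + 1 : ℕ) : ℝ) + (j : ℝ) + 1 = (k : ℝ) + j + 2 := by push_cast; ring
        rw [h1, h2]
        have hp0 : (0:ℝ) ≤ (p:ℝ) := Nat.cast_nonneg p
        have hk0 : (0:ℝ) ≤ (k:ℝ) := Nat.cast_nonneg k
        have hj0 : (0:ℝ) ≤ (j:ℝ) := Nat.cast_nonneg j
        gcongr
        all_goals first | positivity | linarith
    have step2 : (∏ j ∈ Finset.range m, (((j : ℝ) + p + 2) / ((j : ℝ) + 2))) =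
        (Nat.factorial (m + p + 1) : ℝ) /
          ((Nat.factorial (p + 1) : ℝ) * (Nat.factorial (m + 1) : ℝ)) := prodQ p m
    have step3 : (Nat.factorial (m + p + 1) : ℝ) ≤
        (Nat.factorial (m + 1) : ℝ) * ((m : ℝ) + p + 1) ^ p := by
      have h := fact_add_le (m + 1) p
      rw [show m + 1 + p = m + p + 1 by ring] at h
      calc (Nat.factorial (m + p + 1) : ℝ) ≤
          ((Nat.factorial (m + 1) * (m + p + 1) ^ p : ℕ) : ℝ) := by exact_mod_cast h
        _ = (Nat.factorial (m + 1) : ℝ) * ((m : ℝ) + p + 1) ^ p := by push_cast; ring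
    calc P ≤ (Nat.factorial (m + p + 1) : ℝ) /
          ((Nat.factorial (p + 1) : ℝ) * (Nat.factorial (m + 1) : ℝ)) := step1.trans step2.le
      _ ≤ ((Nat.factorial (m + 1) : ℝ) * ((m : ℝ) + p + 1) ^ p) /
          ((Nat.factorial (p + 1) : ℝ) * (Nat.factorial (m + 1) : ℝ)) := by
          gcongr
      _ = ((m : ℝ) + p + 1) ^ p / (Nat.factorial (p + 1) : ℝ) := by
          have hf2 : (Nat.factorial (m + 1) : ℝ) ≠ 0 :=
            Nat.cast_ne_zero.mpr (Nat.factorial_ne_zero _)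
          field_simp
  -- bound B / m!
  have hB0 : 0 ≤ B * (1 / (Nat.factorial m : ℝ)) := by
    apply mul_nonneg
    · apply div_nonneg <;> positivity
    · positivity
  have hB : B * (1 / (Nat.factorial m : ℝ)) ≤ 1 / ((m : ℝ) + 1) := by
    have hkey := nat_key k m
    have hkeyR : ((m : ℝ) + 1) * ((Nat.factorial (k + m) : ℝ) * (Nat.factorial (k + m) : ℝ)) ≤
        (Nat.factorial (2 * k + m + 1) : ℝ) * (Nat.factorial m : ℝ) := by
      exact_mod_cast hkey
    rw [hB_def]
    have hd1 : (0 : ℝ) < (Nat.factorial (2 * k + m + 1) : ℝ) := by exact_mod_cast Nat.factorial_pos _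
    have hd2 : (0 : ℝ) < (Nat.factorial m : ℝ) := by exact_mod_cast Nat.factorial_pos _
    rw [div_mul_div_comm, mul_one, div_le_div_iff₀ (by positivity) (by positivity)]
    nlinarith [hkeyR]
  -- combine
  rw [hc, hexp]
  calc P * A * (B * (1 / (Nat.factorial m : ℝ)))
      ≤ (((m : ℝ) + p + 1) ^ p / (Nat.factorial (p + 1) : ℝ)) * A * (1 / ((m : ℝ) + 1)) := by
        apply mul_le_mul
        · exact mul_le_mul_of_nonneg_right hP hA0.le
        · exact hB
        · exact hB0
        · positivity
    _ ≤ (A / (Nat.factorial (p + 1) : ℝ)) * ((((p : ℝ) + 2) ^ p * (m : ℝ) ^ p) * (1 / (m : ℝ))) := by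
        have hX : ((m : ℝ) + p + 1) ^ p ≤ ((p : ℝ) + 2) ^ p * (m : ℝ) ^ p := by
          rw [← mul_pow]
          apply pow_le_pow_left₀ (by positivity)
          nlinarith [Nat.cast_nonneg (α := ℝ) p]
        have h1m : (1 : ℝ) / ((m : ℝ) + 1) ≤ 1 / (m : ℝ) := by
          apply one_div_le_one_div_of_le hm0R
          linarith
        calc (((m : ℝ) + p + 1) ^ p / (Nat.factorial (p + 1) : ℝ)) * A * (1 / ((m : ℝ) + 1))
            = (A / (Nat.factorial (p + 1) : ℝ)) * (((m : ℝ) + p + 1) ^ p * (1 / ((m : ℝ) + 1))) := by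
              ring
          _ ≤ (A / (Nat.factorial (p + 1) : ℝ)) *
              ((((p : ℝ) + 2) ^ p * (m : ℝ) ^ p) * (1 / (m : ℝ))) := by
              apply mul_le_mul_of_nonneg_left _ (by positivity)
              apply mul_le_mul hX h1m (by positivity) (by positivity)
    _ = A * ((p : ℝ) + 2) ^ p / (Nat.factorial (p + 1) : ℝ) * ((m : ℝ) ^ p / (m : ℝ)) := by
        ring

end Stmt6
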